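/- arXiv:2407.14893 — 2 statements merged into one kernel-verified Lean document; each statement's English description precedes it below -/
import Mathlib

section
/- In the blow-up setup, let (y_i) ⊂ B and (r_i) be positive reals with |y_i|/r_i → +∞. Then ∫_{B_{r_i}(y_i) ∩ B} |u_i|^{2*} dx → 0 as i → ∞. -/
open MeasureTheory Metric Filter Topology Real

noncomputable section

def lap {n : ℕ} (u : EuclideanSpace ℝ (Fin n) → ℝ) : EuclideanSpace ℝ (Fin n) → ℝ :=
  fun x => ∑ i : Fin n, iteratedFDeriv ℝ 2 u x (fun _ => EuclideanSpace.single i 1)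

def iterLap {n : ℕ} (k : ℕ) (u : EuclideanSpace ℝ (Fin n) → ℝ) :
    EuclideanSpace ℝ (Fin n) → ℝ :=
  lap^[k] u

def twoStar (n k : ℕ) : ℝ := 2 * n / ((n : ℝ) - 2 * k)

def ank (n k : ℕ) : ℝ :=
  (∏ j ∈ Finset.range (2 * k), ((n : ℝ) + 2 * ((j : ℝ) - (k : ℝ)))) ^ (-(1 : ℝ) / (k : ℝ))

def Ubub (n k : ℕ) (x : EuclideanSpace ℝ (Fin n)) : ℝ :=
  (1 / (1 + ank n k * ‖x‖ ^ 2)) ^ (((n : ℝ) - 2 * k) / 2)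

def BlowUpSetup (n k : ℕ) (M : ℝ) (lam : ℕ → ℝ)
    (u : ℕ → EuclideanSpace ℝ (Fin n) → ℝ) : Prop :=
  (∀ i, 0 < lam i) ∧ Filter.Tendsto lam Filter.atTop (nhds 0) ∧
  (∀ i, ContDiff ℝ (2 * k : ℕ) (u i)) ∧
  (∀ i, ∀ x y : EuclideanSpace ℝ (Fin n), ‖x‖ = ‖y‖ → u i x = u i y) ∧
  (∀ i, ∀ x ∈ Metric.ball (0 : EuclideanSpace ℝ (Fin n)) 1,
    iterLap k (u i) x - lam i * u i x = |u i x| ^ (twoStar n k - 2) * u i x) ∧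
  (∀ i, ∀ x : EuclideanSpace ℝ (Fin n), ‖x‖ = 1 → ∀ j < k,
    iteratedFDeriv ℝ j (u i) x (fun _ => x) = 0) ∧
  (∀ i, ∃ x ∈ Metric.closedBall (0 : EuclideanSpace ℝ (Fin n)) 1, u i x ≠ 0) ∧
  (∀ i, (∫ x in Metric.ball (0 : EuclideanSpace ℝ (Fin n)) 1, |u i x| ^ twoStar n k)
      ≤ M ^ twoStar n k)

def CLocConv {n : ℕ} (m : ℕ) (S : Set (EuclideanSpace ℝ (Fin n)))
    (f : ℕ → EuclideanSpace ℝ (Fin n) → ℝ) (g : EuclideanSpace ℝ (Fin n) → ℝ) : Prop :=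
  ∀ K : Set (EuclideanSpace ℝ (Fin n)), K ⊆ S → IsCompact K → ∀ j ≤ m,
    Filter.Tendsto
      (fun i => ⨆ x : K, ‖iteratedFDeriv ℝ j (f i) (x : EuclideanSpace ℝ (Fin n))
        - iteratedFDeriv ℝ j g (x : EuclideanSpace ℝ (Fin n))‖)
      Filter.atTop (nhds 0)

def Concentration (n k : ℕ) (u : ℕ → EuclideanSpace ℝ (Fin n) → ℝ)
    (ν : ℕ → ℝ) (ε₀ : ℝ) : Prop :=
  (∀ i, 0 < ν i) ∧ Filter.Tendsto ν Filter.atTop (nhds 0) ∧ (ε₀ = 1 ∨ ε₀ = -1) ∧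
  CLocConv (2 * k) {(0 : EuclideanSpace ℝ (Fin n))}ᶜ
    (fun i z => (ν i) ^ (((n : ℝ) - 2 * k) / 2) * u i ((ν i) • z))
    (fun z => ε₀ * Ubub n k z) ∧
  Filter.Tendsto (fun R : ℝ => Filter.limsup (fun i =>
      ⨆ x : {x : EuclideanSpace ℝ (Fin n) //
        x ∈ Metric.ball (0 : EuclideanSpace ℝ (Fin n)) 1 ∧ R * ν i ≤ ‖x‖},
        ‖(x : EuclideanSpace ℝ (Fin n))‖ ^ (((n : ℝ) - 2 * k) / 2)
          * |u i (x : EuclideanSpace ℝ (Fin n))|) Filter.atTop)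
    Filter.atTop (nhds 0)

def Tfun (n k : ℕ) (u : EuclideanSpace ℝ (Fin n) → ℝ) (x : EuclideanSpace ℝ (Fin n)) : ℝ :=
  (((n : ℝ) - 2 * k) / 2) * u x + fderiv ℝ u x x

def ndS {n : ℕ} (u : EuclideanSpace ℝ (Fin n) → ℝ) (x : EuclideanSpace ℝ (Fin n)) : ℝ :=
  fderiv ℝ u x (‖x‖⁻¹ • x)

def halfLapSq {n : ℕ} (k : ℕ) (u : EuclideanSpace ℝ (Fin n) → ℝ)
    (x : EuclideanSpace ℝ (Fin n)) : ℝ :=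
  if k % 2 = 0 then (iterLap (k / 2) u x) ^ 2 else ‖gradient (iterLap (k / 2) u) x‖ ^ 2

def Sfun (n k : ℕ) (u : EuclideanSpace ℝ (Fin n) → ℝ) (x : EuclideanSpace ℝ (Fin n)) : ℝ :=
  (∑ i ∈ Finset.range (k / 2),
    (-(ndS (iterLap (k - i - 1) u) x) * iterLap i (Tfun n k u) x
      + iterLap (k - i - 1) u x * ndS (iterLap i (Tfun n k u)) x))
  - (if k % 2 = 1 then ndS (iterLap (k / 2) u) x * iterLap (k / 2) (Tfun n k u) x else 0)

def sphVol (n : ℕ) : ℝ :=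
  (μH[(n : ℝ) - 1] (Metric.sphere (0 : EuclideanSpace ℝ (Fin n)) 1)).toReal

def Cnk (n k : ℕ) : ℝ :=
  1 / (((n : ℝ) - 2) * sphVol n *
    ∏ i ∈ Finset.Icc 1 (k - 1), (((n : ℝ) - 2 * k + 2 * ((i : ℝ) - 1)) * (2 * (k : ℝ) - 2 * (i : ℝ))))

lemma coord_abs_le_norm {n : ℕ} (x : EuclideanSpace ℝ (Fin n)) (i : Fin n) : |x i| ≤ ‖x‖ := by
  rw [EuclideanSpace.norm_eq]
  have h1 : |x i| = Real.sqrt (‖x i‖ ^ 2) := by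
    rw [Real.sqrt_sq_eq_abs, Real.norm_eq_abs, abs_abs]
  rw [h1]
  exact Real.sqrt_le_sqrt (Finset.single_le_sum (f := fun j => ‖x j‖ ^ 2)
    (fun j _ => sq_nonneg _) (Finset.mem_univ i))

lemma norm_two_single {n : ℕ} {i j : Fin n} (hij : i ≠ j) (a b : ℝ) :
    ‖(EuclideanSpace.single i a + EuclideanSpace.single j b : EuclideanSpace ℝ (Fin n))‖ ^ 2
      = a ^ 2 + b ^ 2 := by
  rw [norm_add_sq_real]
  have hinner : (inner ℝ (EuclideanSpace.single i a)
      (EuclideanSpace.single j b : EuclideanSpace ℝ (Fin n)) : ℝ) = 0 := by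
    rw [EuclideanSpace.inner_single_left]
    simp [EuclideanSpace.single_apply, hij]
  rw [hinner, EuclideanSpace.norm_single, EuclideanSpace.norm_single]
  simp [Real.norm_eq_abs, sq_abs]

lemma radial_setIntegral_eq {n : ℕ} {f : EuclideanSpace ℝ (Fin n) → ℝ}
    (hf : ∀ x y : EuclideanSpace ℝ (Fin n), ‖x‖ = ‖y‖ → f x = f y)
    {y z : EuclideanSpace ℝ (Fin n)} (hyz : ‖y‖ = ‖z‖) (r : ℝ) :
    ∫ x in Metric.ball z r ∩ Metric.ball (0 : EuclideanSpace ℝ (Fin n)) 1, f x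
      = ∫ x in Metric.ball y r ∩ Metric.ball (0 : EuclideanSpace ℝ (Fin n)) 1, f x := by
  set R : EuclideanSpace ℝ (Fin n) ≃ₗᵢ[ℝ] EuclideanSpace ℝ (Fin n) :=
    Submodule.reflection (ℝ ∙ (y - z))ᗮ with hRdef
  have hRy : R y = z := Submodule.reflection_sub hyz
  have hsymz : R.symm z = y := by rw [← hRy, R.symm_apply_apply]
  have hpre : R ⁻¹' (Metric.ball z r ∩ Metric.ball 0 1)
      = Metric.ball y r ∩ Metric.ball (0 : EuclideanSpace ℝ (Fin n)) 1 := by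
    rw [Set.preimage_inter, R.preimage_ball, R.preimage_ball, hsymz, map_zero]
  have hcomp : (fun x => f (R x)) = f := funext fun x => hf (R x) x (R.norm_map x)
  have hkey := R.measurePreserving.setIntegral_preimage_emb
    R.toMeasurableEquiv.measurableEmbedding f (Metric.ball z r ∩ Metric.ball 0 1)
  rw [← hkey, hpre]
  exact integral_congr_ae (Filter.Eventually.of_forall fun x => hf (R x) x (R.norm_map x))

lemma exists_packing {n : ℕ} (hn : 3 ≤ n) (N : ℕ) {c r : ℝ} (hr : 0 < r)
    (hc : 2 * r * N ≤ c) :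
    ∃ z : ℕ → EuclideanSpace ℝ (Fin n), (∀ j, j < N → ‖z j‖ = c) ∧
      ∀ j, j < N → ∀ l, l < N → j ≠ l → 2 * r ≤ dist (z j) (z l) := by
  have i0 : Fin n := ⟨0, by omega⟩
  set i₀ : Fin n := ⟨0, by omega⟩ with hi0
  set i₁ : Fin n := ⟨1, by omega⟩ with hi1
  have hi : i₀ ≠ i₁ := by simp [hi0, hi1, Fin.ext_iff]
  set b : ℕ → ℝ := fun j => 2 * r * j with hb
  set a : ℕ → ℝ := fun j => Real.sqrt (c ^ 2 - b j ^ 2) with ha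
  have hc0 : 0 ≤ c := le_trans (by positivity) hc
  have hbc : ∀ j, j < N → b j ≤ c := by
    intro j hj
    have h1 : (j : ℝ) + 1 ≤ N := by exact_mod_cast hj
    have : 2 * r * j + 2 * r ≤ c := by nlinarith
    simp only [hb]; linarith
  refine ⟨fun j => EuclideanSpace.single i₀ (a j) + EuclideanSpace.single i₁ (b j), ?_, ?_⟩
  · intro j hj
    have hbj : 0 ≤ b j := by positivity
    have ha2 : a j ^ 2 = c ^ 2 - b j ^ 2 := Real.sq_sqrt (by nlinarith [hbc j hj])
    have hnorm2 := norm_two_single hi (a j) (b j)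
    have : ‖(EuclideanSpace.single i₀ (a j) + EuclideanSpace.single i₁ (b j) :
        EuclideanSpace ℝ (Fin n))‖ ^ 2 = c ^ 2 := by rw [hnorm2, ha2]; ring
    calc ‖(EuclideanSpace.single i₀ (a j) + EuclideanSpace.single i₁ (b j) :
            EuclideanSpace ℝ (Fin n))‖
        = Real.sqrt (‖(EuclideanSpace.single i₀ (a j) + EuclideanSpace.single i₁ (b j) :
            EuclideanSpace ℝ (Fin n))‖ ^ 2) := (Real.sqrt_sq (norm_nonneg _)).symm
      _ = Real.sqrt (c ^ 2) := by rw [this]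
      _ = c := Real.sqrt_sq hc0
  · intro j hj l hl hjl
    have hjl' : (1 : ℝ) ≤ |(j : ℝ) - (l : ℝ)| := by
      rcases hjl.lt_or_gt with h | h
      · have hc : (j : ℝ) + 1 ≤ (l : ℝ) := by exact_mod_cast h
        rw [abs_sub_comm, abs_of_nonneg (by linarith)]
        linarith
      · have hc : (l : ℝ) + 1 ≤ (j : ℝ) := by exact_mod_cast h
        rw [abs_of_nonneg (by linarith)]
        linarith
    have hcoord : (EuclideanSpace.single i₀ (a j) + EuclideanSpace.single i₁ (b j)
        - (EuclideanSpace.single i₀ (a l) + EuclideanSpace.single i₁ (b l)) :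
        EuclideanSpace ℝ (Fin n)) i₁ = b j - b l := by
      simp [PiLp.sub_apply, PiLp.add_apply, EuclideanSpace.single_apply, hi, Ne.symm hi]
    have hle := coord_abs_le_norm
      (EuclideanSpace.single i₀ (a j) + EuclideanSpace.single i₁ (b j)
        - (EuclideanSpace.single i₀ (a l) + EuclideanSpace.single i₁ (b l)) :
        EuclideanSpace ℝ (Fin n)) i₁
    rw [hcoord] at hle
    have habs : |b j - b l| = 2 * r * |(j : ℝ) - (l : ℝ)| := by
      have hrw : b j - b l = (2 * r) * ((j : ℝ) - (l : ℝ)) := by simp only [hb]; ring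
      rw [hrw, abs_mul, abs_of_pos (by linarith : (0:ℝ) < 2 * r)]
    have h2r : 2 * r ≤ |b j - b l| := by
      rw [habs]; nlinarith
    rw [dist_eq_norm]
    exact le_trans h2r hle

theorem stmt2 (n k : ℕ) (hk : 2 ≤ 2 * k) (hn : 2 * k < n) (M : ℝ) (hM : 0 < M)
    (lam : ℕ → ℝ) (u : ℕ → EuclideanSpace ℝ (Fin n) → ℝ)
    (hsetup : BlowUpSetup n k M lam u)
    (y : ℕ → EuclideanSpace ℝ (Fin n)) (hy : ∀ i, y i ∈ Metric.ball (0 : EuclideanSpace ℝ (Fin n)) 1)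
    (r : ℕ → ℝ) (hr : ∀ i, 0 < r i)
    (hdiv : Filter.Tendsto (fun i => ‖y i‖ / r i) Filter.atTop Filter.atTop) :
    Filter.Tendsto
      (fun i => ∫ x in Metric.ball (y i) (r i) ∩ Metric.ball (0 : EuclideanSpace ℝ (Fin n)) 1,
        |u i x| ^ twoStar n k)
      Filter.atTop (nhds 0) := by
  obtain ⟨hlam, hlam0, hsmooth, hrad, hpde, hbc, hne, hbound⟩ := hsetup
  have hn3 : 3 ≤ n := by omega
  have hp_pos : 0 < twoStar n k := by
    unfold twoStar
    have h1 : (2 * k : ℝ) < n := by exact_mod_cast hn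
    have h2 : (0 : ℝ) < n := by positivity
    apply div_pos (by linarith) (by linarith)
  have hfc : ∀ i, Continuous (fun x => |u i x| ^ twoStar n k) := fun i =>
    Continuous.rpow_const (continuous_abs.comp (hsmooth i).continuous)
      (fun x => Or.inr hp_pos.le)
  have hf0 : ∀ i (x : EuclideanSpace ℝ (Fin n)), 0 ≤ |u i x| ^ twoStar n k :=
    fun i x => Real.rpow_nonneg (abs_nonneg _) _
  have hfi : ∀ i, IntegrableOn (fun x => |u i x| ^ twoStar n k)
      (Metric.ball (0 : EuclideanSpace ℝ (Fin n)) 1) volume := fun i =>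
    (((hfc i).continuousOn).integrableOn_compact (isCompact_closedBall 0 1)).mono_set
      Metric.ball_subset_closedBall
  rw [NormedAddCommGroup.tendsto_nhds_zero]
  intro ε hε
  set N : ℕ := ⌈M ^ twoStar n k / ε⌉₊ + 1 with hNdef
  have hN0 : 0 < (N : ℝ) := by positivity
  have hMN : M ^ twoStar n k < ε * N := by
    have h1 : M ^ twoStar n k / ε ≤ (⌈M ^ twoStar n k / ε⌉₊ : ℝ) := Nat.le_ceil _
    have h2 : (⌈M ^ twoStar n k / ε⌉₊ : ℝ) < N := by
      rw [hNdef]; push_cast; linarith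
    have h3 : M ^ twoStar n k / ε < N := lt_of_le_of_lt h1 h2
    calc M ^ twoStar n k = (M ^ twoStar n k / ε) * ε := by field_simp
      _ < N * ε := by apply mul_lt_mul_of_pos_right h3 hε
      _ = ε * N := by ring
  filter_upwards [hdiv.eventually_ge_atTop (2 * N + 1 : ℝ)] with i hi
  have hri := hr i
  have hyc : 2 * r i * N ≤ ‖y i‖ := by
    have h1 : (2 * N + 1 : ℝ) * r i ≤ ‖y i‖ := (le_div_iff₀ hri).1 hi
    nlinarith
  obtain ⟨z, hznorm, hzdist⟩ := exists_packing hn3 N hri hyc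
  set t : ℕ → Set (EuclideanSpace ℝ (Fin n)) := fun j =>
    Metric.ball (z j) (r i) ∩ Metric.ball (0 : EuclideanSpace ℝ (Fin n)) 1 with ht
  set I : ℝ := ∫ x in Metric.ball (y i) (r i) ∩ Metric.ball (0 : EuclideanSpace ℝ (Fin n)) 1,
    |u i x| ^ twoStar n k with hI
  have hteq : ∀ j ∈ Finset.range N, (∫ x in t j, |u i x| ^ twoStar n k) = I := by
    intro j hj
    exact radial_setIntegral_eq (fun x x' h => by rw [hrad i x x' h])
      (hznorm j (Finset.mem_range.1 hj)).symm (r i)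
  have hdisj : Set.Pairwise ↑(Finset.range N) (Function.onFun Disjoint t) := by
    intro a ha b hb hab
    have := hzdist a (by simpa using ha) b (by simpa using hb) hab
    exact Disjoint.mono Set.inter_subset_left Set.inter_subset_left
      (Metric.ball_disjoint_ball (by linarith))
  have hmeas : ∀ j ∈ Finset.range N, MeasurableSet (t j) := fun j _ =>
    measurableSet_ball.inter measurableSet_ball
  have hint : ∀ j ∈ Finset.range N,
      IntegrableOn (fun x => |u i x| ^ twoStar n k) (t j) volume := fun j _ =>
    (hfi i).mono_set Set.inter_subset_right
  have hsum := integral_biUnion_finset (Finset.range N) hmeas hdisj hint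
  have hUsub : (⋃ j ∈ Finset.range N, t j) ⊆ Metric.ball (0 : EuclideanSpace ℝ (Fin n)) 1 :=
    Set.iUnion₂_subset fun j _ => Set.inter_subset_right
  have hle : (N : ℝ) * I ≤ M ^ twoStar n k := by
    have h1 : ∑ j ∈ Finset.range N, (∫ x in t j, |u i x| ^ twoStar n k)
        ≤ M ^ twoStar n k := by
      rw [← hsum]
      calc (∫ x in ⋃ j ∈ Finset.range N, t j, |u i x| ^ twoStar n k)
          ≤ ∫ x in Metric.ball (0 : EuclideanSpace ℝ (Fin n)) 1, |u i x| ^ twoStar n k :=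
            setIntegral_mono_set (hfi i)
              (Filter.Eventually.of_forall (hf0 i)) (HasSubset.Subset.eventuallyLE hUsub)
        _ ≤ M ^ twoStar n k := hbound i
    calc (N : ℝ) * I = ∑ j ∈ Finset.range N, I := by
          rw [Finset.sum_const, Finset.card_range, nsmul_eq_mul]
      _ = ∑ j ∈ Finset.range N, (∫ x in t j, |u i x| ^ twoStar n k) :=
          (Finset.sum_congr rfl hteq).symm
      _ ≤ M ^ twoStar n k := h1
  have hI0 : 0 ≤ I :=
    setIntegral_nonneg (measurableSet_ball.inter measurableSet_ball) (fun x _ => hf0 i x)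
  have : I < ε := by
    by_contra h
    push_neg at h
    have : (N : ℝ) * ε ≤ (N : ℝ) * I := by
      apply mul_le_mul_of_nonneg_left h (le_of_lt hN0)
    nlinarith
  calc ‖I‖ = I := Real.norm_of_nonneg hI0
    _ < ε := this
end
end

section
/- In the blow-up setup with the concentration hypothesis, assume additionally that 2k < n < 4k, fix δ ∈ (0,1), and suppose there exist C' > 0 and i₀ such that |u_i(x)| ≤ C'·ν_i^{(n−2k)/2}·|x|^{2k−n} for all x ∈ B_δ(0) with |x| ≥ ν_i and all i ≥ i₀. Then there exists C > 0 such that |∫_{B_δ(0)} u_i·T(u_i) dx| ≤ C·ν_i^{n−2k} for all sufficiently large i. -/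
open MeasureTheory Metric Filter Topology Real

noncomputable section

open Set in
lemma polar (n : ℕ) (hn : 0 < n) (G : ℝ → ℝ) (δ : ℝ) :
    ∫ x in ball (0 : EuclideanSpace ℝ (Fin n)) δ, G ‖x‖
      = ((n : ℝ) * (volume (ball (0 : EuclideanSpace ℝ (Fin n)) 1)).toReal)
        * ∫ r in Ioo (0:ℝ) δ, r ^ (n-1) * G r := by
  haveI : Nonempty (Fin n) := Fin.pos_iff_nonempty.mp hn
  haveI : Nontrivial (EuclideanSpace ℝ (Fin n)) := by
    infer_instance
  have h1 : ∫ x in ball (0 : EuclideanSpace ℝ (Fin n)) δ, G ‖x‖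
      = ∫ x : EuclideanSpace ℝ (Fin n), (Set.indicator (Iio δ) G) ‖x‖ := by
    rw [← integral_indicator measurableSet_ball]
    congr 1
    ext x
    by_cases h : ‖x‖ < δ
    · simp [Set.indicator_apply, mem_ball_zero_iff, Set.mem_Iio, h]
    · simp [Set.indicator_apply, mem_ball_zero_iff, Set.mem_Iio, h]
  rw [h1, integral_fun_norm_addHaar volume (Set.indicator (Iio δ) G)]
  rw [finrank_euclideanSpace_fin]
  rw [nsmul_eq_mul, smul_eq_mul]
  rw [mul_assoc]
  congr 1
  congr 1
  have h2 : ∀ r : ℝ, r ^ (n-1) • (Set.indicator (Iio δ) G) r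
      = Set.indicator (Iio δ) (fun r => r ^ (n-1) * G r) r := by
    intro r
    by_cases h : r ∈ Iio δ
    · simp [Set.indicator_apply, h]
    · simp [Set.indicator_apply, h]
  rw [integral_congr_ae (Filter.Eventually.of_forall h2)]
  rw [setIntegral_indicator measurableSet_Iio]
  rw [Set.Ioi_inter_Iio]

open Set in
lemma key_identity (n k : ℕ) (hn : 0 < n) (u : EuclideanSpace ℝ (Fin n) → ℝ)
    (hu : ContDiff ℝ 1 u)
    (hrad : ∀ x y : EuclideanSpace ℝ (Fin n), ‖x‖ = ‖y‖ → u x = u y)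
    (δ : ℝ) (hδ : 0 < δ) :
    ∫ x in ball (0 : EuclideanSpace ℝ (Fin n)) δ, u x * Tfun n k u x
      = -(k:ℝ) * (∫ x in ball (0 : EuclideanSpace ℝ (Fin n)) δ, (u x)^2)
        + ((n : ℝ) * (volume (ball (0 : EuclideanSpace ℝ (Fin n)) 1)).toReal)
          * (δ^n * (u (δ • EuclideanSpace.single (⟨0, hn⟩ : Fin n) (1:ℝ)))^2 / 2) := by
  set e0 : EuclideanSpace ℝ (Fin n) := EuclideanSpace.single (⟨0, hn⟩ : Fin n) (1:ℝ) with he0def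
  set f : ℝ → ℝ := fun r => u (r • e0) with hfdef
  set f' : ℝ → ℝ := fun r => fderiv ℝ u (r • e0) e0 with hf'def
  have hdiff : Differentiable ℝ u := hu.differentiable one_ne_zero
  have he0 : ‖e0‖ = 1 := by simp [he0def, EuclideanSpace.norm_single]
  have hsmul : Continuous (fun r : ℝ => r • e0) := continuous_id.smul continuous_const
  have hf : ∀ r, HasDerivAt f (f' r) r := by
    intro r
    have h1 : HasDerivAt (fun t : ℝ => t • e0) e0 r := by
      simpa using (hasDerivAt_id r).smul_const e0
    exact (hdiff (r • e0)).hasFDerivAt.comp_hasDerivAt r h1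
  have hfc : Continuous f := hu.continuous.comp hsmul
  have hf'c : Continuous f' :=
    ((hu.continuous_fderiv one_ne_zero).comp hsmul).clm_apply continuous_const
  have hux : ∀ x : EuclideanSpace ℝ (Fin n), u x = f ‖x‖ := by
    intro x
    refine hrad x (‖x‖ • e0) ?_
    rw [norm_smul, he0, mul_one, Real.norm_eq_abs, abs_of_nonneg (norm_nonneg x)]
  have hTx : ∀ x : EuclideanSpace ℝ (Fin n), fderiv ℝ u x x = ‖x‖ * f' ‖x‖ := by
    intro x
    rcases eq_or_ne x 0 with rfl | hx
    · simp
    · have hxpos : 0 < ‖x‖ := norm_pos_iff.2 hx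
      have hsx : HasDerivAt (fun t : ℝ => t • x) x 1 := by
        simpa using (hasDerivAt_id (1:ℝ)).smul_const x
      have h1 : HasDerivAt (fun t : ℝ => u (t • x)) (fderiv ℝ u x x) 1 := by
        have := (hdiff ((1:ℝ) • x)).hasFDerivAt.comp_hasDerivAt 1 hsx
        simpa [one_smul, Function.comp_def] using this
      have h2 : HasDerivAt (fun t : ℝ => f (t * ‖x‖)) (f' ‖x‖ * ‖x‖) 1 := by
        have := (hf (1 * ‖x‖)).comp 1 (hasDerivAt_mul_const ‖x‖)
        simpa [one_mul, Function.comp_def] using this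
      have heq : (fun t : ℝ => f (t * ‖x‖)) =ᶠ[𝓝 (1:ℝ)] (fun t : ℝ => u (t • x)) := by
        filter_upwards [Ioi_mem_nhds (zero_lt_one)] with t (ht : 0 < t)
        rw [hux (t • x), norm_smul, Real.norm_eq_abs, abs_of_pos ht]
      have h1' : HasDerivAt (fun t : ℝ => f (t * ‖x‖)) (fderiv ℝ u x x) 1 :=
        h1.congr_of_eventuallyEq heq
      have := h1'.unique h2
      rw [this]; ring
  set G : ℝ → ℝ := fun r => (((n:ℝ) - 2*k)/2) * f r^2 + r * f r * f' r with hGdef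
  have hint : ∀ x : EuclideanSpace ℝ (Fin n), u x * Tfun n k u x = G ‖x‖ := by
    intro x
    rw [Tfun, hTx x, hGdef]
    simp only
    rw [← hux x]
    ring
  have e1 : ∫ x in ball (0 : EuclideanSpace ℝ (Fin n)) δ, u x * Tfun n k u x
      = ∫ x in ball (0 : EuclideanSpace ℝ (Fin n)) δ, G ‖x‖ :=
    integral_congr_ae (ae_of_all _ fun x => hint x)
  have e2 : ∫ x in ball (0 : EuclideanSpace ℝ (Fin n)) δ, (u x)^2
      = ∫ x in ball (0 : EuclideanSpace ℝ (Fin n)) δ, (fun r => f r ^ 2) ‖x‖ :=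
    integral_congr_ae (ae_of_all _ fun x => by simp only; rw [hux x])
  rw [e1, polar n hn G δ]
  conv_rhs => rw [e2, polar n hn (fun r => f r ^ 2) δ]
  -- now 1-D computation
  set κ : ℝ := (n : ℝ) * (volume (ball (0 : EuclideanSpace ℝ (Fin n)) 1)).toReal with hκdef
  set F : ℝ → ℝ := fun r => r^n * (f r * f r) / 2 with hFdef
  set F' : ℝ → ℝ := fun r =>
    (((n:ℝ) * r^(n-1)) * (f r * f r) + r^n * (f' r * f r + f r * f' r)) / 2 with hF'def
  have hF : ∀ r, HasDerivAt F (F' r) r := by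
    intro r
    exact ((hasDerivAt_pow n r).mul ((hf r).mul (hf r))).div_const 2
  have hF'c : Continuous F' :=
    (((continuous_const.mul (continuous_pow (n-1))).mul (hfc.mul hfc)).add
      ((continuous_pow n).mul ((hf'c.mul hfc).add (hfc.mul hf'c)))).div_const 2
  have hpow : ∀ r : ℝ, r ^ n = r ^ (n-1) * r := by
    intro r
    conv_lhs => rw [← Nat.sub_add_cancel hn]
    exact pow_succ r (n-1)
  have key1 : ∀ r : ℝ, r^(n-1) * G r = -(k:ℝ) * (r^(n-1) * f r^2) + F' r := by
    intro r
    rw [hGdef, hF'def]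
    simp only
    rw [hpow r]
    ring
  have hi1 : IntegrableOn (fun r : ℝ => r^(n-1) * f r ^ 2) (Ioo 0 δ) volume :=
    (((continuous_pow (n-1)).mul (hfc.pow 2)).continuousOn.integrableOn_compact
      isCompact_Icc).mono_set Set.Ioo_subset_Icc_self
  have hi2 : IntegrableOn F' (Ioo 0 δ) volume :=
    (hF'c.continuousOn.integrableOn_compact isCompact_Icc).mono_set Set.Ioo_subset_Icc_self
  have e3 : ∫ r in Ioo (0:ℝ) δ, r ^ (n-1) * G r
      = ∫ r in Ioo (0:ℝ) δ, (-(k:ℝ) * (r^(n-1) * f r^2) + F' r) :=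
    integral_congr_ae (ae_of_all _ fun r => key1 r)
  have e4 : ∫ r in Ioo (0:ℝ) δ, (-(k:ℝ) * (r^(n-1) * f r^2) + F' r)
      = -(k:ℝ) * (∫ r in Ioo (0:ℝ) δ, r^(n-1) * f r^2) + ∫ r in Ioo (0:ℝ) δ, F' r := by
    rw [integral_add (hi1.const_mul _) hi2, integral_const_mul]
  have e5 : ∫ r in Ioo (0:ℝ) δ, F' r = δ^n * (f δ)^2 / 2 := by
    rw [← integral_Ioc_eq_integral_Ioo, ← intervalIntegral.integral_of_le hδ.le]
    rw [intervalIntegral.integral_eq_sub_of_hasDerivAt (fun x _ => hF x)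
      (hF'c.intervalIntegrable 0 δ)]
    rw [hFdef]
    simp only
    rw [zero_pow hn.ne']
    ring
  rw [e3, e4, e5]
  ring

open Set in
lemma inner_bound (n k : ℕ) (hk : 0 < k) (hkn : 2*k < n) (hn4 : n < 4*k)
    (u : EuclideanSpace ℝ (Fin n) → ℝ) (hu : Continuous u)
    (ν : ℝ) (hν : 0 < ν) (hν1 : ν ≤ 1) (M : ℝ) (hM : 0 < M)
    (hL : (∫ x in ball (0 : EuclideanSpace ℝ (Fin n)) 1, |u x| ^ twoStar n k)
        ≤ M ^ twoStar n k) :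
    ∫ x in ball (0 : EuclideanSpace ℝ (Fin n)) ν, (u x)^2
      ≤ M^2 * (volume (ball (0 : EuclideanSpace ℝ (Fin n)) 1)).toReal ^ ((2*(k:ℝ))/n)
          * ν ^ ((n:ℝ) - 2*k) := by
  have hn0 : 0 < n := lt_trans (by positivity) hkn
  have hnk : (0:ℝ) < (n:ℝ) - 2*k := by
    have : (2*k : ℝ) < n := by exact_mod_cast hkn
    linarith
  have hkR : (0:ℝ) < (k:ℝ) := by exact_mod_cast hk
  have hnR : (0:ℝ) < (n:ℝ) := by exact_mod_cast hn0
  set μ := volume.restrict (ball (0 : EuclideanSpace ℝ (Fin n)) ν) with hμ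
  haveI : IsFiniteMeasure μ := ⟨by
    rw [hμ, Measure.restrict_apply_univ]; exact measure_ball_lt_top⟩
  set p : ℝ := (n:ℝ)/((n:ℝ)-2*k) with hp
  set q : ℝ := (n:ℝ)/(2*(k:ℝ)) with hq
  have hpq : Real.HolderConjugate p q := by
    refine Real.holderConjugate_iff.mpr ⟨?_, ?_⟩
    · rw [hp, lt_div_iff₀ hnk]; linarith
    · rw [hp, hq]
      rw [inv_div, inv_div]
      field_simp
      ring
  have htS : twoStar n k = 2 * p := by rw [twoStar, hp]; field_simp
  -- boundedness of u^2 on the closed ball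
  obtain ⟨C0, hC0⟩ := (isCompact_closedBall (0 : EuclideanSpace ℝ (Fin n)) ν).exists_bound_of_continuousOn
    ((hu.pow 2).continuousOn (s := closedBall 0 ν))
  have hmemf : MemLp (fun x => (u x)^2) (ENNReal.ofReal p) μ := by
    apply MemLp.of_bound ((hu.pow 2).aestronglyMeasurable) C0
    rw [hμ]
    filter_upwards [ae_restrict_mem measurableSet_ball] with x hx
    exact hC0 x (ball_subset_closedBall hx)
  have hmemg : MemLp (fun _ : EuclideanSpace ℝ (Fin n) => (1:ℝ)) (ENNReal.ofReal q) μ :=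
    memLp_const 1
  have hH := integral_mul_le_Lp_mul_Lq_of_nonneg hpq
    (ae_of_all μ fun x => sq_nonneg (u x)) (ae_of_all μ fun _ => zero_le_one) hmemf hmemg
  simp only [mul_one] at hH
  -- identify the three integrals
  have hfp : ∫ x, ((u x)^2) ^ p ∂μ = ∫ x in ball (0 : EuclideanSpace ℝ (Fin n)) ν, |u x| ^ twoStar n k := by
    rw [hμ]
    apply integral_congr_ae (ae_of_all _ fun x => ?_)
    rw [htS, ← sq_abs (u x)]
    rw [← Real.rpow_natCast |u x| 2, ← Real.rpow_mul (abs_nonneg _)]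
    norm_num
  have hgq : ∫ _x, (1:ℝ) ^ q ∂μ = (volume (ball (0 : EuclideanSpace ℝ (Fin n)) ν)).toReal := by
    simp [hμ, Real.one_rpow]
    rfl
  rw [hfp, hgq] at hH
  -- bound the Lp factor
  have htS0 : (0:ℝ) ≤ twoStar n k := by
    rw [twoStar]; positivity
  have hcont_tS : Continuous (fun x : EuclideanSpace ℝ (Fin n) => |u x| ^ twoStar n k) :=
    hu.abs.rpow_const fun x => Or.inr htS0
  have hsub : ∫ x in ball (0 : EuclideanSpace ℝ (Fin n)) ν, |u x| ^ twoStar n k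
      ≤ ∫ x in ball (0 : EuclideanSpace ℝ (Fin n)) 1, |u x| ^ twoStar n k := by
    apply setIntegral_mono_set
    · exact (hcont_tS.continuousOn.integrableOn_compact (isCompact_closedBall _ _)).mono_set
        ball_subset_closedBall
    · exact ae_of_all _ fun x => Real.rpow_nonneg (abs_nonneg _) _
    · exact HasSubset.Subset.eventuallyLE (ball_subset_ball hν1)
  have hLp : (∫ x in ball (0 : EuclideanSpace ℝ (Fin n)) ν, |u x| ^ twoStar n k) ^ (1/p)
      ≤ M ^ 2 := by
    have h1 : (∫ x in ball (0 : EuclideanSpace ℝ (Fin n)) ν, |u x| ^ twoStar n k) ^ (1/p)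
        ≤ (M ^ twoStar n k) ^ (1/p) := by
      apply Real.rpow_le_rpow (setIntegral_nonneg measurableSet_ball
        fun x _ => Real.rpow_nonneg (abs_nonneg _) _) (le_trans hsub hL)
      positivity
    refine le_trans h1 (le_of_eq ?_)
    rw [← Real.rpow_natCast M 2, ← Real.rpow_mul hM.le]
    congr 1
    rw [htS]
    field_simp
    rw [mul_div_assoc, div_self (ne_of_gt (by rw [hp]; exact div_pos hnR hnk))]
    norm_num
  -- compute the Lq factor
  have hvol : (volume (ball (0 : EuclideanSpace ℝ (Fin n)) ν)).toReal
      = ν ^ n * (volume (ball (0 : EuclideanSpace ℝ (Fin n)) 1)).toReal := by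
    haveI : Nonempty (Fin n) := Fin.pos_iff_nonempty.mp hn0
    haveI : Nontrivial (EuclideanSpace ℝ (Fin n)) := inferInstance
    rw [Measure.addHaar_ball volume (0 : EuclideanSpace ℝ (Fin n)) hν.le, ENNReal.toReal_mul, ENNReal.toReal_ofReal (by positivity),
      finrank_euclideanSpace_fin]
  have hq1 : 1/q = 2*(k:ℝ)/n := by rw [hq]; field_simp
  have hLq : (volume (ball (0 : EuclideanSpace ℝ (Fin n)) ν)).toReal ^ (1/q)
      = ν ^ ((2:ℝ)*k) * (volume (ball (0 : EuclideanSpace ℝ (Fin n)) 1)).toReal ^ ((2*(k:ℝ))/n) := by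
    rw [hvol, Real.mul_rpow (by positivity) ENNReal.toReal_nonneg, hq1]
    congr 1
    rw [← Real.rpow_natCast ν n, ← Real.rpow_mul hν.le]
    congr 1
    field_simp
  have hνexp : ν ^ ((2:ℝ)*k) ≤ ν ^ ((n:ℝ) - 2*k) := by
    apply Real.rpow_le_rpow_of_exponent_ge hν hν1
    have : (n:ℝ) < 4*k := by exact_mod_cast hn4
    linarith
  calc ∫ x in ball (0 : EuclideanSpace ℝ (Fin n)) ν, (u x)^2
      ≤ (∫ x in ball (0 : EuclideanSpace ℝ (Fin n)) ν, |u x| ^ twoStar n k) ^ (1/p)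
          * (volume (ball (0 : EuclideanSpace ℝ (Fin n)) ν)).toReal ^ (1/q) := hH
    _ ≤ M^2 * (volume (ball (0 : EuclideanSpace ℝ (Fin n)) ν)).toReal ^ (1/q) :=
        mul_le_mul_of_nonneg_right hLp (Real.rpow_nonneg ENNReal.toReal_nonneg _)
    _ = M^2 * (ν ^ ((2:ℝ)*k)
          * (volume (ball (0 : EuclideanSpace ℝ (Fin n)) 1)).toReal ^ ((2*(k:ℝ))/n)) := by
        rw [hLq]
    _ ≤ M^2 * (ν ^ ((n:ℝ) - 2*k)
          * (volume (ball (0 : EuclideanSpace ℝ (Fin n)) 1)).toReal ^ ((2*(k:ℝ))/n)) := by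
        apply mul_le_mul_of_nonneg_left
          (mul_le_mul_of_nonneg_right hνexp (Real.rpow_nonneg ENNReal.toReal_nonneg _))
          (by positivity)
    _ = M^2 * (volume (ball (0 : EuclideanSpace ℝ (Fin n)) 1)).toReal ^ ((2*(k:ℝ))/n)
          * ν ^ ((n:ℝ) - 2*k) := by ring

open Set in
lemma outer_bound (n : ℕ) (hn : 0 < n)
    (u : EuclideanSpace ℝ (Fin n) → ℝ) (hu : Continuous u)
    (hrad : ∀ x y : EuclideanSpace ℝ (Fin n), ‖x‖ = ‖y‖ → u x = u y)
    (ν δ B β : ℝ) (hν : 0 < ν) (hνδ : ν ≤ δ) (hB : 0 ≤ B)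
    (hexp : (0:ℝ) < (n:ℝ) + 2*β)
    (hpt : ∀ x ∈ ball (0 : EuclideanSpace ℝ (Fin n)) δ \ ball (0 : EuclideanSpace ℝ (Fin n)) ν,
      |u x| ≤ B * ‖x‖ ^ β) :
    ∫ x in ball (0 : EuclideanSpace ℝ (Fin n)) δ \ ball (0 : EuclideanSpace ℝ (Fin n)) ν, (u x)^2
      ≤ ((n : ℝ) * (volume (ball (0 : EuclideanSpace ℝ (Fin n)) 1)).toReal)
          * (B^2 * (δ ^ ((n:ℝ) + 2*β) / ((n:ℝ) + 2*β))) := by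
  have hδ0 : 0 < δ := lt_of_lt_of_le hν hνδ
  haveI : Nonempty (Fin n) := Fin.pos_iff_nonempty.mp hn
  set e0 : EuclideanSpace ℝ (Fin n) := EuclideanSpace.single (⟨0, hn⟩ : Fin n) (1:ℝ) with he0def
  have he0 : ‖e0‖ = 1 := by simp [he0def, EuclideanSpace.norm_single]
  set f : ℝ → ℝ := fun r => u (r • e0) with hfdef
  have hfc : Continuous f := hu.comp (continuous_id.smul continuous_const)
  have hux : ∀ x : EuclideanSpace ℝ (Fin n), u x = f ‖x‖ := by
    intro x
    refine hrad x (‖x‖ • e0) ?_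
    rw [norm_smul, he0, mul_one, Real.norm_eq_abs, abs_of_nonneg (norm_nonneg x)]
  have hSmeas : MeasurableSet {x : EuclideanSpace ℝ (Fin n) | ν ≤ ‖x‖} :=
    (isClosed_le continuous_const continuous_norm).measurableSet
  have hsetEq : ball (0 : EuclideanSpace ℝ (Fin n)) δ \ ball (0 : EuclideanSpace ℝ (Fin n)) ν
      = ball (0 : EuclideanSpace ℝ (Fin n)) δ ∩ {x | ν ≤ ‖x‖} := by
    ext x
    simp [mem_ball_zero_iff, not_lt]
  have step1 : ∫ x in ball (0 : EuclideanSpace ℝ (Fin n)) δ \ ball (0 : EuclideanSpace ℝ (Fin n)) ν, (u x)^2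
      = ∫ x in ball (0 : EuclideanSpace ℝ (Fin n)) δ,
          (Ici ν).indicator (fun s => f s ^ 2) ‖x‖ := by
    rw [hsetEq, ← setIntegral_indicator hSmeas]
    apply integral_congr_ae (ae_of_all _ fun x => ?_)
    by_cases h : ν ≤ ‖x‖
    · rw [Set.indicator_of_mem (show x ∈ {x : EuclideanSpace ℝ (Fin n) | ν ≤ ‖x‖} from h),
        Set.indicator_of_mem (show ‖x‖ ∈ Ici ν from h), hux x]
    · rw [Set.indicator_of_notMem (show x ∉ {x : EuclideanSpace ℝ (Fin n) | ν ≤ ‖x‖} from h),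
        Set.indicator_of_notMem (show ‖x‖ ∉ Ici ν from h)]
  rw [step1, polar n hn ((Ici ν).indicator (fun s => f s ^ 2)) δ]
  have step2 : ∫ r in Ioo (0:ℝ) δ, r ^ (n-1) * (Ici ν).indicator (fun s => f s ^ 2) r
      = ∫ r in Ico ν δ, r ^ (n-1) * f r ^ 2 := by
    have h1 : ∀ r : ℝ, r ^ (n-1) * (Ici ν).indicator (fun s => f s ^ 2) r
        = Set.indicator (Ici ν) (fun s => s ^ (n-1) * f s ^ 2) r := by
      intro r
      by_cases h : r ∈ Ici ν
      · rw [Set.indicator_of_mem h, Set.indicator_of_mem h]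
      · rw [Set.indicator_of_notMem h, Set.indicator_of_notMem h, mul_zero]
    have hset : Ioo (0:ℝ) δ ∩ Ici ν = Ico ν δ := by
      ext r
      simp only [Set.mem_inter_iff, Set.mem_Ioo, Set.mem_Ici, Set.mem_Ico]
      constructor
      · rintro ⟨⟨_, h2⟩, h3⟩; exact ⟨h3, h2⟩
      · rintro ⟨h1', h2⟩; exact ⟨⟨lt_of_lt_of_le hν h1', h2⟩, h1'⟩
    rw [integral_congr_ae (ae_of_all _ h1), setIntegral_indicator measurableSet_Ici, hset]
  rw [step2]
  set γ : ℝ := (n:ℝ) - 1 + 2*β with hγdef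
  have hγ : -1 < γ := by rw [hγdef]; linarith
  have hmono : ∫ r in Ico ν δ, r ^ (n-1) * f r ^ 2 ≤ ∫ r in Ico ν δ, B^2 * r ^ γ := by
    apply setIntegral_mono_on
    · exact (((continuous_pow (n-1)).mul (hfc.pow 2)).continuousOn.integrableOn_compact
        isCompact_Icc).mono_set Set.Ico_subset_Icc_self
    · refine ((ContinuousOn.integrableOn_compact isCompact_Icc ?_).mono_set
        Set.Ico_subset_Icc_self)
      refine continuousOn_const.mul (ContinuousOn.rpow_const continuousOn_id fun x hx => ?_)
      exact Or.inl (ne_of_gt (lt_of_lt_of_le hν hx.1))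
    · exact measurableSet_Ico
    · intro r hr
      have hr0 : 0 < r := lt_of_lt_of_le hν hr.1
      have hfr : |f r| ≤ B * r ^ β := by
        have hx : (r • e0) ∈ ball (0 : EuclideanSpace ℝ (Fin n)) δ
            \ ball (0 : EuclideanSpace ℝ (Fin n)) ν := by
          constructor
          · rw [mem_ball_zero_iff, norm_smul, he0, mul_one, Real.norm_eq_abs,
              abs_of_pos hr0]
            exact hr.2
          · rw [mem_ball_zero_iff, norm_smul, he0, mul_one, Real.norm_eq_abs,
              abs_of_pos hr0, not_lt]
            exact hr.1
        have := hpt (r • e0) hx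
        rwa [norm_smul, he0, mul_one, Real.norm_eq_abs, abs_of_pos hr0] at this
      have h2 : f r ^ 2 ≤ B^2 * (r ^ β)^2 :=
        calc f r ^ 2 = |f r| ^ 2 := (sq_abs _).symm
          _ ≤ (B * r ^ β)^2 := pow_le_pow_left₀ (abs_nonneg _) hfr 2
          _ = B^2 * (r ^ β)^2 := mul_pow B (r ^ β) 2
      calc r ^ (n-1) * f r ^ 2 ≤ r ^ (n-1) * (B^2 * (r ^ β)^2) := by
            apply mul_le_mul_of_nonneg_left h2 (by positivity)
      _ = B^2 * r ^ γ := by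
            have e1 : (r:ℝ) ^ (n-1) = r ^ (((n:ℝ) - 1)) := by
              rw [← Real.rpow_natCast r (n-1), Nat.cast_sub hn, Nat.cast_one]
            have e2 : (r ^ β)^2 = r ^ (2*β) := by
              rw [sq, ← Real.rpow_add hr0]; ring_nf
            rw [e1, e2, hγdef, Real.rpow_add hr0]
            ring
  have hval : ∫ r in Ico ν δ, B^2 * r ^ γ ≤ B^2 * (δ ^ ((n:ℝ) + 2*β) / ((n:ℝ) + 2*β)) := by
    rw [integral_Ico_eq_integral_Ioo, ← integral_Ioc_eq_integral_Ioo,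
      ← intervalIntegral.integral_of_le hνδ]
    rw [intervalIntegral.integral_const_mul, integral_rpow (Or.inl hγ)]
    have hγ1 : γ + 1 = (n:ℝ) + 2*β := by rw [hγdef]; ring
    rw [hγ1]
    apply mul_le_mul_of_nonneg_left _ (by positivity : (0:ℝ) ≤ B^2)
    apply (div_le_div_iff_of_pos_right hexp).mpr
    exact sub_le_self _ (Real.rpow_nonneg hν.le _)
  calc ((n : ℝ) * (volume (ball (0 : EuclideanSpace ℝ (Fin n)) 1)).toReal)
        * ∫ r in Ico ν δ, r ^ (n-1) * f r ^ 2
      ≤ ((n : ℝ) * (volume (ball (0 : EuclideanSpace ℝ (Fin n)) 1)).toReal)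
        * (B^2 * (δ ^ ((n:ℝ) + 2*β) / ((n:ℝ) + 2*β))) := by
        apply mul_le_mul_of_nonneg_left (le_trans hmono hval)
        exact mul_nonneg (Nat.cast_nonneg n) ENNReal.toReal_nonneg

theorem stmt15 (n k : ℕ) (hk : 2 ≤ 2 * k) (hn : 2 * k < n) (hn4 : n < 4 * k)
    (M : ℝ) (hM : 0 < M)
    (lam : ℕ → ℝ) (u : ℕ → EuclideanSpace ℝ (Fin n) → ℝ)
    (hsetup : BlowUpSetup n k M lam u)
    (ν : ℕ → ℝ) (ε₀ : ℝ) (hconc : Concentration n k u ν ε₀)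
    (δ : ℝ) (hδ0 : 0 < δ) (hδ1 : δ < 1)
    (C' : ℝ) (hC' : 0 < C') (i₀ : ℕ)
    (hbound : ∀ i ≥ i₀, ∀ x ∈ Metric.ball (0 : EuclideanSpace ℝ (Fin n)) δ, ν i ≤ ‖x‖ →
      |u i x| ≤ C' * (ν i) ^ (((n : ℝ) - 2 * k) / 2) * ‖x‖ ^ (2 * (k : ℝ) - n)) :
    ∃ C : ℝ, 0 < C ∧ ∃ i₁ : ℕ, ∀ i ≥ i₁,
      |∫ x in Metric.ball (0 : EuclideanSpace ℝ (Fin n)) δ, u i x * Tfun n k (u i) x|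
        ≤ C * (ν i) ^ ((n : ℝ) - 2 * k) := by
  obtain ⟨-, -, hsmooth, hradial, -, -, -, hLbound⟩ := hsetup
  obtain ⟨hν0, hνlim, -, -, -⟩ := hconc
  have hk1 : 0 < k := by omega
  have hn0 : 0 < n := by omega
  have hnkR : (0:ℝ) < (n:ℝ) - 2*k := by
    have : (2*k:ℝ) < n := by exact_mod_cast hn
    push_cast
    linarith
  have h4k : (n:ℝ) < 4*k := by exact_mod_cast hn4
  have hE : (0:ℝ) < (n:ℝ) + 2*(2*(k:ℝ) - n) := by linarith
  set V : ℝ := (volume (ball (0 : EuclideanSpace ℝ (Fin n)) 1)).toReal with hVdef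
  have hV0 : 0 ≤ V := ENNReal.toReal_nonneg
  have hκ0 : (0:ℝ) ≤ (n:ℝ) * V := mul_nonneg (Nat.cast_nonneg n) hV0
  set C₁ : ℝ := M^2 * V ^ ((2*(k:ℝ))/n) with hC₁def
  set C₂ : ℝ := ((n:ℝ) * V) * (C'^2 * (δ ^ ((n:ℝ) + 2*(2*(k:ℝ) - n)) / ((n:ℝ) + 2*(2*(k:ℝ) - n)))) with hC₂def
  set C₃ : ℝ := ((n:ℝ) * V) * (δ^n * (C' * δ ^ (2*(k:ℝ) - n))^2 / 2) with hC₃def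
  have hC₁0 : 0 ≤ C₁ := by rw [hC₁def]; positivity
  have hC₂0 : 0 ≤ C₂ := by
    rw [hC₂def]
    exact mul_nonneg hκ0 (mul_nonneg (sq_nonneg _)
      (div_nonneg (Real.rpow_nonneg hδ0.le _) hE.le))
  have hC₃0 : 0 ≤ C₃ := by
    rw [hC₃def]
    exact mul_nonneg hκ0 (by positivity)
  refine ⟨(k:ℝ) * (C₁ + C₂) + C₃ + 1, ?_, ?_⟩
  · have h1 : 0 ≤ (k:ℝ) * (C₁ + C₂) := mul_nonneg (Nat.cast_nonneg k) (by linarith)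
    linarith
  have hev : ∀ᶠ i in atTop, (ν i < min δ 1 ∧ i ≥ i₀) :=
    (hνlim.eventually (eventually_lt_nhds (lt_min hδ0 one_pos))).and (eventually_ge_atTop i₀)
  obtain ⟨i₁, hi₁⟩ := eventually_atTop.1 hev
  refine ⟨i₁, fun i hi => ?_⟩
  obtain ⟨hνsmall, hii₀⟩ := hi₁ i hi
  have hνδ : ν i < δ := lt_of_lt_of_le hνsmall (min_le_left _ _)
  have hν1 : ν i ≤ 1 := le_of_lt (lt_of_lt_of_le hνsmall (min_le_right _ _))
  have hνpos := hν0 i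
  have hu1 : ContDiff ℝ 1 (u i) :=
    (hsmooth i).of_le (by exact_mod_cast (show (1:ℕ) ≤ 2*k by omega))
  set e0 : EuclideanSpace ℝ (Fin n) := EuclideanSpace.single (⟨0, hn0⟩ : Fin n) (1:ℝ) with he0def
  have he0n : ‖e0‖ = 1 := by simp [he0def, EuclideanSpace.norm_single]
  have hid := key_identity n k hn0 (u i) hu1 (hradial i) δ hδ0
  set S : ℝ := ∫ x in ball (0 : EuclideanSpace ℝ (Fin n)) δ, (u i x)^2 with hSdef
  have hS0 : 0 ≤ S := setIntegral_nonneg measurableSet_ball (fun x _ => sq_nonneg _)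
  have hiOn : IntegrableOn (fun x => (u i x)^2)
      (closedBall (0 : EuclideanSpace ℝ (Fin n)) δ) volume :=
    (hu1.continuous.pow 2).continuousOn.integrableOn_compact (isCompact_closedBall _ _)
  have hsplit : S = (∫ x in ball (0 : EuclideanSpace ℝ (Fin n)) (ν i), (u i x)^2)
      + ∫ x in ball (0 : EuclideanSpace ℝ (Fin n)) δ
          \ ball (0 : EuclideanSpace ℝ (Fin n)) (ν i), (u i x)^2 := by
    have hun : ball (0 : EuclideanSpace ℝ (Fin n)) (ν i)
        ∪ (ball (0 : EuclideanSpace ℝ (Fin n)) δ \ ball (0 : EuclideanSpace ℝ (Fin n)) (ν i))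
        = ball (0 : EuclideanSpace ℝ (Fin n)) δ :=
      Set.union_diff_cancel (ball_subset_ball hνδ.le)
    rw [hSdef]
    conv_lhs => rw [← hun]
    rw [setIntegral_union Set.disjoint_sdiff_right
      (measurableSet_ball.diff measurableSet_ball)
      (hiOn.mono_set ((ball_subset_ball hνδ.le).trans ball_subset_closedBall))
      (hiOn.mono_set (Set.diff_subset.trans ball_subset_closedBall))]
  have hIn := inner_bound n k hk1 hn hn4 (u i) hu1.continuous (ν i) hνpos hν1 M hM (hLbound i)
  have hpt : ∀ x ∈ ball (0 : EuclideanSpace ℝ (Fin n)) δ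
      \ ball (0 : EuclideanSpace ℝ (Fin n)) (ν i),
      |u i x| ≤ (C' * ν i ^ (((n:ℝ) - 2*k)/2)) * ‖x‖ ^ (2*(k:ℝ) - n) := by
    intro x hx
    have hge : ν i ≤ ‖x‖ := not_lt.1 (fun h => hx.2 (mem_ball_zero_iff.2 h))
    have := hbound i hii₀ x hx.1 hge
    linarith [this]
  have hOut := outer_bound n hn0 (u i) hu1.continuous (hradial i) (ν i) δ
    (C' * ν i ^ (((n:ℝ) - 2*k)/2)) (2*(k:ℝ) - n) hνpos hνδ.le
    (by positivity) (by linarith) hpt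
  have hps : (ν i ^ (((n:ℝ) - 2*k)/2))^2 = ν i ^ ((n:ℝ) - 2*k) := by
    rw [sq, ← Real.rpow_add hνpos]
    ring_nf
  have hOut' : ∫ x in ball (0 : EuclideanSpace ℝ (Fin n)) δ
      \ ball (0 : EuclideanSpace ℝ (Fin n)) (ν i), (u i x)^2
      ≤ C₂ * ν i ^ ((n:ℝ) - 2*k) := by
    refine le_trans hOut (le_of_eq ?_)
    rw [hC₂def, mul_pow, hps]
    ring
  have hIn' : ∫ x in ball (0 : EuclideanSpace ℝ (Fin n)) (ν i), (u i x)^2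
      ≤ C₁ * ν i ^ ((n:ℝ) - 2*k) := hIn
  have hSle : S ≤ (C₁ + C₂) * ν i ^ ((n:ℝ) - 2*k) := by
    rw [hsplit]
    calc (∫ x in ball (0 : EuclideanSpace ℝ (Fin n)) (ν i), (u i x)^2)
        + ∫ x in ball (0 : EuclideanSpace ℝ (Fin n)) δ
            \ ball (0 : EuclideanSpace ℝ (Fin n)) (ν i), (u i x)^2
        ≤ C₁ * ν i ^ ((n:ℝ) - 2*k) + C₂ * ν i ^ ((n:ℝ) - 2*k) := add_le_add hIn' hOut'
      _ = (C₁ + C₂) * ν i ^ ((n:ℝ) - 2*k) := by ring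
  -- boundary value bound
  have hbd : |u i (δ • e0)| ≤ C' * ν i ^ (((n:ℝ) - 2*k)/2) * δ ^ (2*(k:ℝ) - n) := by
    have hsm : Continuous (fun r : ℝ => r • e0) := continuous_id.smul continuous_const
    have hlhs : Tendsto (fun r : ℝ => |u i (r • e0)|) (𝓝[<] δ) (𝓝 |u i (δ • e0)|) :=
      (((hu1.continuous.comp hsm).abs.tendsto δ)).mono_left nhdsWithin_le_nhds
    have hrhs : Tendsto (fun r : ℝ => C' * ν i ^ (((n:ℝ) - 2*k)/2) * r ^ (2*(k:ℝ) - n))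
        (𝓝[<] δ) (𝓝 (C' * ν i ^ (((n:ℝ) - 2*k)/2) * δ ^ (2*(k:ℝ) - n))) := by
      apply Tendsto.mono_left _ nhdsWithin_le_nhds
      exact (Real.continuousAt_rpow_const δ _ (Or.inl hδ0.ne')).const_mul _
    refine le_of_tendsto_of_tendsto hlhs hrhs ?_
    filter_upwards [Ioo_mem_nhdsLT_of_mem (show δ ∈ Set.Ioc (ν i) δ from ⟨hνδ, le_rfl⟩)]
      with r hr
    have hr0 : 0 < r := lt_trans hνpos hr.1
    have hmem : (r • e0) ∈ ball (0 : EuclideanSpace ℝ (Fin n)) δ := by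
      rw [mem_ball_zero_iff, norm_smul, he0n, mul_one, Real.norm_eq_abs, abs_of_pos hr0]
      exact hr.2
    have hge : ν i ≤ ‖r • e0‖ := by
      rw [norm_smul, he0n, mul_one, Real.norm_eq_abs, abs_of_pos hr0]
      exact hr.1.le
    have := hbound i hii₀ (r • e0) hmem hge
    rwa [norm_smul, he0n, mul_one, Real.norm_eq_abs, abs_of_pos hr0] at this
  have hbd2 : (u i (δ • e0))^2
      ≤ (C' * δ ^ (2*(k:ℝ) - n))^2 * ν i ^ ((n:ℝ) - 2*k) := by
    calc (u i (δ • e0))^2 = |u i (δ • e0)|^2 := (sq_abs _).symm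
      _ ≤ (C' * ν i ^ (((n:ℝ) - 2*k)/2) * δ ^ (2*(k:ℝ) - n))^2 := by
          apply pow_le_pow_left₀ (abs_nonneg _) hbd
      _ = (C' * δ ^ (2*(k:ℝ) - n))^2 * (ν i ^ (((n:ℝ) - 2*k)/2))^2 := by ring
      _ = (C' * δ ^ (2*(k:ℝ) - n))^2 * ν i ^ ((n:ℝ) - 2*k) := by rw [hps]
  have hbd3 : ((n:ℝ) * V) * (δ^n * (u i (δ • e0))^2 / 2)
      ≤ C₃ * ν i ^ ((n:ℝ) - 2*k) := by
    have h1 : δ^n * (u i (δ • e0))^2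
        ≤ δ^n * ((C' * δ ^ (2*(k:ℝ) - n))^2 * ν i ^ ((n:ℝ) - 2*k)) :=
      mul_le_mul_of_nonneg_left hbd2 (pow_nonneg hδ0.le n)
    calc ((n:ℝ) * V) * (δ^n * (u i (δ • e0))^2 / 2)
        ≤ ((n:ℝ) * V) * (δ^n * ((C' * δ ^ (2*(k:ℝ) - n))^2 * ν i ^ ((n:ℝ) - 2*k)) / 2) := by
          apply mul_le_mul_of_nonneg_left _ hκ0
          linarith
      _ = C₃ * ν i ^ ((n:ℝ) - 2*k) := by rw [hC₃def]; ring
  rw [hid]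
  have hbdry0 : 0 ≤ ((n:ℝ) * V) * (δ^n * (u i (δ • e0))^2 / 2) :=
    mul_nonneg hκ0 (by positivity)
  calc |(-(k:ℝ)) * S + ((n:ℝ) * V) * (δ^n * (u i (δ • e0))^2 / 2)|
      ≤ |(-(k:ℝ)) * S| + |((n:ℝ) * V) * (δ^n * (u i (δ • e0))^2 / 2)| := abs_add_le _ _
    _ = (k:ℝ) * S + ((n:ℝ) * V) * (δ^n * (u i (δ • e0))^2 / 2) := by
        rw [abs_of_nonneg hbdry0, abs_mul, abs_neg, Nat.abs_cast, abs_of_nonneg hS0]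
    _ ≤ (k:ℝ) * ((C₁ + C₂) * ν i ^ ((n:ℝ) - 2*k)) + C₃ * ν i ^ ((n:ℝ) - 2*k) :=
        add_le_add (mul_le_mul_of_nonneg_left hSle (Nat.cast_nonneg k)) hbd3
    _ = ((k:ℝ) * (C₁ + C₂) + C₃) * ν i ^ ((n:ℝ) - 2*k) := by ring
    _ ≤ ((k:ℝ) * (C₁ + C₂) + C₃ + 1) * ν i ^ ((n:ℝ) - 2*k) := by
        apply mul_le_mul_of_nonneg_right (by linarith) (Real.rpow_nonneg hνpos.le _)
end
end
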